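/- arXiv:1501.03475 — 2 statements merged into one kernel-verified Lean document; each statement's English description precedes it below -/
import Mathlib

section
/- Let X be a compact metric space and f : X → X a surjective 1-Lipschitz map. Then f is an isometry. -/
/-- A surjective 1-Lipschitz self-map of a compact metric space
is an isometry. -/
theorem stmt_2 {X : Type*} [MetricSpace X] [CompactSpace X] (f : X → X)
    (hf : LipschitzWith 1 f) (hs : Function.Surjective f) : Isometry f := by
  apply Isometry.of_dist_eq
  intro x y
  refine le_antisymm (by simpa using hf.dist_le_mul x y) ?_
  -- It suffices to show dist x y ≤ dist (f x) (f y)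
  refine le_of_forall_pos_le_add fun ε hε => ?_
  -- choose preimages at each depth
  have hsn : ∀ n : ℕ, Function.Surjective (f^[n]) := fun n => hs.iterate n
  choose u hu using fun n => hsn n x
  choose v hv using fun n => hsn n y
  -- compactness: convergent subsequence of (u n, v n)
  obtain ⟨⟨a, b⟩, φ, hφ, hconv⟩ :=
    CompactSpace.tendsto_subseq (fun n => ((u n, v n) : X × X))
  rw [Metric.tendsto_atTop] at hconv
  obtain ⟨N, hN⟩ := hconv (ε / 4) (by linarith)
  set k := φ N with hk
  set l := φ (N + 1) with hl
  have hkl : k < l := hφ (Nat.lt_succ_self N)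
  have hdu : dist (u k) (u l) < ε / 2 := by
    calc dist (u k) (u l) ≤ dist (u k) a + dist (u l) a := dist_triangle_right _ _ _
      _ < ε / 4 + ε / 4 := by
          have h1 := hN N le_rfl
          have h2 := hN (N + 1) (Nat.le_succ N)
          simp only [Prod.dist_eq, max_lt_iff] at h1 h2
          exact add_lt_add h1.1 h2.1
      _ = ε / 2 := by ring
  have hdv : dist (v k) (v l) < ε / 2 := by
    calc dist (v k) (v l) ≤ dist (v k) b + dist (v l) b := dist_triangle_right _ _ _
      _ < ε / 4 + ε / 4 := by
          have h1 := hN N le_rfl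
          have h2 := hN (N + 1) (Nat.le_succ N)
          simp only [Prod.dist_eq, max_lt_iff] at h1 h2
          exact add_lt_add h1.2 h2.2
      _ = ε / 2 := by ring
  set m := l - k with hm
  have hm1 : 1 ≤ m := Nat.le_sub_of_add_le (by omega)
  -- dist (f^[m] x) x < ε/2
  have hflk : ∀ z, f^[m] (f^[k] z) = f^[l] z := by
    intro z
    rw [← Function.iterate_add_apply]
    congr 1
    omega
  have hx : dist (f^[m] x) x < ε / 2 := by
    calc dist (f^[m] x) x = dist (f^[m] (f^[k] (u k))) (f^[l] (u l)) := by rw [hu, hu]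
      _ = dist (f^[l] (u k)) (f^[l] (u l)) := by rw [hflk]
      _ ≤ dist (u k) (u l) := by simpa using (hf.iterate l).dist_le_mul (u k) (u l)
      _ < ε / 2 := hdu
  have hy : dist (f^[m] y) y < ε / 2 := by
    calc dist (f^[m] y) y = dist (f^[m] (f^[k] (v k))) (f^[l] (v l)) := by rw [hv, hv]
      _ = dist (f^[l] (v k)) (f^[l] (v l)) := by rw [hflk]
      _ ≤ dist (v k) (v l) := by simpa using (hf.iterate l).dist_le_mul (v k) (v l)
      _ < ε / 2 := hdv
  -- f^[m] shrinks distances to at most dist (f x) (f y)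
  have hmid : dist (f^[m] x) (f^[m] y) ≤ dist (f x) (f y) := by
    have : f^[m] x = f^[m - 1] (f x) := by
      rw [← Function.iterate_succ_apply]
      congr 1
      omega
    have h2 : f^[m] y = f^[m - 1] (f y) := by
      rw [← Function.iterate_succ_apply]
      congr 1
      omega
    rw [this, h2]
    simpa using (hf.iterate (m - 1)).dist_le_mul (f x) (f y)
  calc dist x y ≤ dist x (f^[m] x) + dist (f^[m] x) (f^[m] y) + dist (f^[m] y) y :=
        dist_triangle4 _ _ _ _
    _ ≤ ε / 2 + dist (f x) (f y) + ε / 2 := by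
        rw [dist_comm x]
        exact add_le_add (add_le_add hx.le hmid) hy.le
    _ = dist (f x) (f y) + ε := by ring
end

section
/- For d ≥ 1 and even j ≥ 0, the integer i = 4d + 2 + j(2d + 1) appears with coefficient 1 in the power series t^{2(2d+1)}/(1 - t²) and with coefficient 0 in the series t³/(1-t⁴) + (1 - t^{4d}) t^{4d+4} / ((1-t⁴)(1-t^{4d+2})). -/
/-!
With `(1 - t^n)⁻¹ = ∑ t^{nk}`, the first coefficient is `1` because `i ≥ 4d + 2` is even. In the
second series, `(1 - t^{4d}) / (1 - t^4) = ∑_{s<d} t^{4s}` leaves the terms `t^{4s+4d+4} / (1 - t^{4d+2})`;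
since `4d + 2 ∣ i`, such a term reaches `t^i` only if `4d + 2 ∣ 4s + 4d + 4`, which lies strictly
between `4d + 2` and `2(4d + 2)`. The term `t³ / (1 - t⁴)` has only odd exponents.
-/

open PowerSeries Finset

namespace PowerSeries

variable {k : Type*} [Field k]

theorem inv_one_sub_X_pow_eq_mk {n : ℕ} (hn : 0 < n) :
    (1 - X ^ n : k⟦X⟧)⁻¹ = mk fun i => if n ∣ i then 1 else 0 := by
  rw [PowerSeries.inv_eq_iff_mul_eq_one (by simp [hn.ne'])]
  ext i
  rw [mul_sub, mul_one, mul_comm, map_sub, coeff_X_pow_mul', coeff_mk, coeff_mk, coeff_one]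
  rcases Nat.eq_zero_or_pos i with rfl | hi
  · simp [hn.ne']
  · by_cases hni : n ≤ i
    · simp [hni, Nat.dvd_sub_iff_left hni dvd_rfl, hi.ne']
    · simp [hni, hi.ne', Nat.not_dvd_of_pos_of_lt hi (not_le.mp hni)]

theorem coeff_X_pow_mul_inv_one_sub_X_pow {n : ℕ} (hn : 0 < n) (a i : ℕ) :
    coeff i (X ^ a * (1 - X ^ n : k⟦X⟧)⁻¹) = if a ≤ i ∧ n ∣ i - a then 1 else 0 := by
  rw [inv_one_sub_X_pow_eq_mk hn, coeff_X_pow_mul', coeff_mk, ite_and]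

theorem one_sub_X_pow_mul_inv_mul {n : ℕ} (hn : 0 < n) (d : ℕ) (φ : k⟦X⟧) :
    (1 - X ^ (n * d)) * ((1 - X ^ n) * φ)⁻¹ = (∑ s ∈ range d, X ^ (n * s)) * φ⁻¹ := by
  have hunit : (1 - X ^ n : k⟦X⟧) * (1 - X ^ n)⁻¹ = 1 :=
    PowerSeries.mul_inv_cancel _ (by simp [hn.ne'])
  simp_rw [pow_mul, ← mul_neg_geom_sum (X ^ n : k⟦X⟧) d, PowerSeries.mul_inv_rev]
  linear_combination (∑ s ∈ range d, ((X : k⟦X⟧) ^ n) ^ s) * φ⁻¹ * hunit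

end PowerSeries

theorem Nat.not_dvd_of_lt_of_lt_two_mul {m a : ℕ} (h₁ : m < a) (h₂ : a < 2 * m) : ¬ m ∣ a := by
  rintro ⟨c, rfl⟩
  have : 1 < c := by nlinarith
  have : c < 2 := by nlinarith
  omega

theorem stmt_14_general (d j : ℕ) (hj : Even j) :
    coeff (R := ℚ) (4 * d + 2 + j * (2 * d + 1))
      ((X : ℚ⟦X⟧) ^ (2 * (2 * d + 1)) * (1 - X ^ 2)⁻¹) = 1 ∧
    coeff (R := ℚ) (4 * d + 2 + j * (2 * d + 1))
      ((X : ℚ⟦X⟧) ^ 3 * (1 - X ^ 4)⁻¹ +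
        (1 - (X : ℚ⟦X⟧) ^ (4 * d)) * X ^ (4 * d + 4) *
          ((1 - (X : ℚ⟦X⟧) ^ 4) * (1 - X ^ (4 * d + 2)))⁻¹) = 0 := by
  obtain ⟨r, rfl⟩ := hj
  set i := 4 * d + 2 + (r + r) * (2 * d + 1)
  have hi_even : i = 2 * (2 * d + 1) + 2 * (r * (2 * d + 1)) := by ring
  have hi_mul : i = (4 * d + 2) * (r + 1) := by ring
  refine ⟨?_, ?_⟩
  · rw [coeff_X_pow_mul_inv_one_sub_X_pow two_pos, if_pos ⟨by omega, by omega⟩]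
  · rw [mul_right_comm, one_sub_X_pow_mul_inv_mul four_pos, sum_mul, sum_mul, map_add, map_sum,
      coeff_X_pow_mul_inv_one_sub_X_pow four_pos, if_neg (by omega), zero_add]
    refine sum_eq_zero fun s hs => ?_
    rw [mul_right_comm, ← pow_add, coeff_X_pow_mul_inv_one_sub_X_pow (by omega)]
    refine if_neg fun ⟨hle, hdvd⟩ => Nat.not_dvd_of_lt_of_lt_two_mul (m := 4 * d + 2) ?_ ?_
      ((Nat.dvd_sub_iff_right hle (hi_mul ▸ dvd_mul_right _ _)).mp hdvd)
    all_goals simp only [mem_range] at hs; omega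

/-- For `d ≥ 1` and even `j ≥ 0`, the integer `i = 4d + 2 + j(2d+1)`
appears with coefficient `1` in the power series `t^{2(2d+1)}/(1 - t²)` and with
coefficient `0` in `t³/(1-t⁴) + (1 - t^{4d}) t^{4d+4} / ((1-t⁴)(1-t^{4d+2}))`. -/
theorem stmt_14 (d j : ℕ) (hd : 1 ≤ d) (hj : Even j) :
    coeff (R := ℚ) (4 * d + 2 + j * (2 * d + 1))
      ((X : ℚ⟦X⟧) ^ (2 * (2 * d + 1)) * (1 - X ^ 2)⁻¹) = 1 ∧
    coeff (R := ℚ) (4 * d + 2 + j * (2 * d + 1))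
      ((X : ℚ⟦X⟧) ^ 3 * (1 - X ^ 4)⁻¹ +
        (1 - (X : ℚ⟦X⟧) ^ (4 * d)) * X ^ (4 * d + 4) *
          ((1 - (X : ℚ⟦X⟧) ^ 4) * (1 - X ^ (4 * d + 2)))⁻¹) = 0 :=
  stmt_14_general d j hj
end
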